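/- Let r > 1 be real, let K be a number field, and let d be an r-mighty norm of K. Then for every nonzero integral ideal I of 𝓞_K, the value σ_{r,K}(I) does not lie in the open interval ( ∏_{𝔭 prime, N(𝔭) > d} (1 − N(𝔭)^{-r})^{-1}, 1 + d^{-r} ); indeed, if some prime ideal 𝔮 with N(𝔮) ≤ d divides I then σ_{r,K}(I) ≥ 1 + d^{-r}, and otherwise σ_{r,K}(I) ≤ ∏_{N(𝔭) > d} (1 − N(𝔭)^{-r})^{-1}. -/

import Mathlib

open NumberField

/-- The ideal divisor function `σ_{r,K}(I) = ∑_{J ∣ I} N(J)^{-r}`. -/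
noncomputable def sigmaK (K : Type*) [Field K] [NumberField K] (r : ℝ)
    (I : Ideal (𝓞 K)) : ℝ :=
  ∑' J : {J : Ideal (𝓞 K) // J ∣ I}, (Ideal.absNorm (J : Ideal (𝓞 K)) : ℝ) ^ (-r)

/-- `d > 1` is an `r`-mighty norm of `K` if `d` is the norm of some nonzero prime ideal of
`𝓞_K` and `1 + d^{-r} > ∏_{𝔭 prime, N(𝔭) > d} (1 − N(𝔭)^{-r})⁻¹`. -/
def IsMightyNorm (K : Type*) [Field K] [NumberField K] (r : ℝ) (d : ℕ) : Prop :=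
  1 < d ∧ (∃ P : Ideal (𝓞 K), P.IsPrime ∧ P ≠ ⊥ ∧ Ideal.absNorm P = d) ∧
    ∏' P : {P : Ideal (𝓞 K) // P.IsPrime ∧ d < Ideal.absNorm P},
        (1 - (Ideal.absNorm (P : Ideal (𝓞 K)) : ℝ) ^ (-r))⁻¹
      < 1 + (d : ℝ) ^ (-r)

/-!
If a prime `𝔮` with `N(𝔮) ≤ d` divides `I`, then `1` and `𝔮` are two distinct divisors of `I`,
so `σ(I) ≥ 1 + N(𝔮)^{-r} ≥ 1 + d^{-r}`. Otherwise every prime factor of `I` has norm `> d`;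
since a divisor `J ∣ I` is determined by its exponents at the prime factors of `I`, `σ(I)` is at
most the product of the geometric series `(1 - N(𝔭)^{-r})⁻¹` over those primes, hence at most the
full Euler product over `N(𝔭) > d`. That product converges because there are at most `[K : ℚ]`
primes of each norm, so `∑ N(𝔭)^{-r} ≤ [K : ℚ] ∑ m^{-r} < ∞`.
-/
open UniqueFactorizationMonoid

section EulerFactors

variable {ι : Type*}

theorem Real.multipliable_inv_one_sub {x : ι → ℝ} (hx0 : ∀ i, 0 ≤ x i) (hx1 : ∀ i, x i < 1)
    (hx : Summable x) : Multipliable fun i => (1 - x i)⁻¹ := by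
  have hpos : ∀ i, 0 < 1 - x i := fun i => sub_pos.2 (hx1 i)
  have hsum : Summable fun i => x i / (1 - x i) := by
    refine (hx.mul_left 2).of_norm_bounded_eventually ?_
    filter_upwards [hx.tendsto_cofinite_zero.eventually_le_const one_half_pos] with i hi
    rw [Real.norm_of_nonneg (div_nonneg (hx0 i) (hpos i).le), div_le_iff₀ (hpos i)]
    nlinarith [hx0 i]
  refine (Real.multipliable_one_add_of_summable hsum).congr fun i => ?_
  field_simp [(hpos i).ne']
  ring

theorem Real.prod_le_tprod_of_one_le {f : ι → ℝ} (hf : Multipliable f) (h1 : ∀ i, 1 ≤ f i)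
    (s : Finset ι) : ∏ i ∈ s, f i ≤ ∏' i, f i :=
  ge_of_tendsto hf.hasProd <| (Filter.eventually_ge_atTop s).mono fun _ hst =>
    Finset.prod_le_prod_of_subset_of_one_le hst (fun i _ => zero_le_one.trans (h1 i))
      fun i _ _ => h1 i

theorem sum_prod_pow_le_prod_inv_one_sub {α : Type*} [Fintype ι] {x : ι → ℝ}
    (hx0 : ∀ i, 0 ≤ x i) (hx1 : ∀ i, x i < 1) (u : Finset α) {e : α → ι → ℕ}
    (he : Set.InjOn e u) :
    ∑ a ∈ u, ∏ i, x i ^ e a i ≤ ∏ i, (1 - x i)⁻¹ := by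
  classical
  set N := u.sup fun a => Finset.univ.sup (e a)
  have hmaps : u.image e ⊆ Fintype.piFinset fun _ => Finset.range (N + 1) := by
    simp only [Finset.image_subset_iff, Fintype.mem_piFinset, Finset.mem_range, Nat.lt_succ_iff]
    exact fun a ha i => (Finset.le_sup (f := e a) (Finset.mem_univ i)).trans
      (Finset.le_sup (f := fun a => Finset.univ.sup (e a)) ha)
  calc ∑ a ∈ u, ∏ i, x i ^ e a i = ∑ v ∈ u.image e, ∏ i, x i ^ v i :=
        (Finset.sum_image (f := fun v => ∏ i, x i ^ v i) he).symm
    _ ≤ ∑ v ∈ Fintype.piFinset fun _ => Finset.range (N + 1), ∏ i, x i ^ v i :=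
      Finset.sum_le_sum_of_subset_of_nonneg hmaps fun v _ _ =>
        Finset.prod_nonneg fun i _ => pow_nonneg (hx0 i) _
    _ = ∏ i, ∑ k ∈ Finset.range (N + 1), x i ^ k := (Finset.prod_univ_sum _ _).symm
    _ ≤ ∏ i, (1 - x i)⁻¹ := by
      refine Finset.prod_le_prod (fun i _ => Finset.sum_nonneg fun k _ => pow_nonneg (hx0 i) k)
        fun i _ => ?_
      calc ∑ k ∈ Finset.range (N + 1), x i ^ k ≤ x i ^ 0 / (1 - x i) :=
            (Finset.range_eq_Ico (N + 1)) ▸ geom_sum_Ico_le_of_lt_one (hx0 i) (hx1 i)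
        _ = (1 - x i)⁻¹ := by rw [pow_zero, one_div]

end EulerFactors

theorem eq_prod_pow_count_normalizedFactors_of_dvd {α : Type*} [CommMonoidWithZero α]
    [NormalizationMonoid α] [UniqueFactorizationMonoid α] [Subsingleton αˣ] [DecidableEq α]
    {I J : α} (hI : I ≠ 0) (hJ : J ∣ I) :
    J = ∏ P ∈ (normalizedFactors I).toFinset, P ^ (normalizedFactors J).count P := by
  have hJ0 : J ≠ 0 := ne_zero_of_dvd_ne_zero hI hJ
  rw [← Finset.prod_multiset_count_of_subset, associated_iff_eq.1 (prod_normalizedFactors hJ0)]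
  exact Multiset.toFinset_subset.2 (Multiset.subset_of_le
    ((dvd_iff_normalizedFactors_le_normalizedFactors hJ0 hI).1 hJ))

theorem Ideal.absNorm_prod_pow_rpow {S : Type*} [CommRing S] [IsDedekindDomain S]
    [Module.Free ℤ S] {ι : Type*} (s : Finset ι) (P : ι → Ideal S) (k : ι → ℕ) (r : ℝ) :
    (absNorm (∏ i ∈ s, P i ^ k i) : ℝ) ^ r = ∏ i ∈ s, ((absNorm (P i) : ℝ) ^ r) ^ k i := by
  simp only [map_prod, map_pow, Nat.cast_prod, Nat.cast_pow]
  rw [← Real.finsetProd_rpow s (fun i => (absNorm (P i) : ℝ) ^ k i) (fun i _ => by positivity)]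
  exact Finset.prod_congr rfl fun i _ => (Real.rpow_pow_comm (Nat.cast_nonneg _) _ _).symm

open Ideal
open scoped Finset

namespace NumberField

variable {K : Type*} [Field K] [NumberField K]

theorem one_lt_absNorm_of_prime {P : Ideal (𝓞 K)} (hP : Prime P) : 1 < absNorm P :=
  HeightOneSpectrum.one_lt_absNorm ⟨P, (prime_iff_isPrime hP.ne_zero).1 hP, hP.ne_zero⟩

theorem rpow_neg_absNorm_lt_one {r : ℝ} (hr : 0 < r) {P : Ideal (𝓞 K)} (hP : Prime P) :
    (absNorm P : ℝ) ^ (-r) < 1 :=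
  Real.rpow_lt_one_of_one_lt_of_neg (mod_cast one_lt_absNorm_of_prime hP) (neg_neg_of_pos hr)

theorem card_le_finrank_of_forall_absNorm_eq {m : ℕ} (u : Finset (Ideal (𝓞 K)))
    (hu : ∀ P ∈ u, Prime P ∧ absNorm P = m) : u.card ≤ Module.finrank ℤ (𝓞 K) := by
  obtain rfl | ⟨P₀, hP₀⟩ := u.eq_empty_or_nonempty
  · exact Nat.zero_le _
  have hm : 1 < m := (hu P₀ hP₀).2 ▸ one_lt_absNorm_of_prime (hu P₀ hP₀).1
  have hdvd : ∏ P ∈ u, P ∣ span {(m : 𝓞 K)} :=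
    Finset.prod_primes_dvd _ (fun P hP => (hu P hP).1) fun P hP => by
      rw [dvd_span_singleton, ← (hu P hP).2]
      exact absNorm_mem P
  have := map_dvd absNorm hdvd
  rw [map_prod, Finset.prod_congr rfl fun P hP => (hu P hP).2, Finset.prod_const,
    absNorm_span_natCast] at this
  exact (Nat.pow_dvd_pow_iff_le_right hm).1 this

theorem summable_absNorm_rpow_neg {r : ℝ} (hr : 1 < r) :
    Summable fun P : {P : Ideal (𝓞 K) // Prime P} => (absNorm (P : Ideal (𝓞 K)) : ℝ) ^ (-r) := by
  classical
  have hζ : Summable fun m : ℕ => (m : ℝ) ^ (-r) := Real.summable_nat_rpow.2 (by linarith)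
  refine summable_of_sum_le (c := Module.finrank ℤ (𝓞 K) * ∑' m : ℕ, (m : ℝ) ^ (-r))
    (fun _ => by positivity) fun u => ?_
  set N : {P : Ideal (𝓞 K) // Prime P} → ℕ := fun P => absNorm (P : Ideal (𝓞 K))
  have hfiber : ∀ m, #{P ∈ u | N P = m} ≤ Module.finrank ℤ (𝓞 K) := fun m => by
    rw [← Finset.card_map (Function.Embedding.subtype _)]
    refine card_le_finrank_of_forall_absNorm_eq (m := m) _ fun P hP => ?_
    obtain ⟨Q, hQ, rfl⟩ := Finset.mem_map.1 hP
    exact ⟨Q.2, (Finset.mem_filter.1 hQ).2⟩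
  calc ∑ P ∈ u, (N P : ℝ) ^ (-r) = ∑ m ∈ u.image N, #{P ∈ u | N P = m} • (m : ℝ) ^ (-r) :=
        Finset.sum_comp (fun m : ℕ => (m : ℝ) ^ (-r)) N
    _ ≤ ∑ m ∈ u.image N, Module.finrank ℤ (𝓞 K) * (m : ℝ) ^ (-r) :=
        Finset.sum_le_sum fun m _ => by
          rw [nsmul_eq_mul]
          gcongr
          exact_mod_cast hfiber m
    _ ≤ Module.finrank ℤ (𝓞 K) * ∑' m : ℕ, (m : ℝ) ^ (-r) := by
        rw [← Finset.mul_sum]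
        gcongr
        exact hζ.sum_le_tsum _ fun m _ => by positivity

theorem prime_of_lt_absNorm {d : ℕ} {P : Ideal (𝓞 K)} (hP : P.IsPrime) (hd : d < absNorm P) :
    Prime P :=
  (prime_iff_isPrime fun h => absurd hd (by simp [h])).2 hP

theorem multipliable_inv_one_sub_absNorm_rpow {r : ℝ} (hr : 1 < r) (d : ℕ) :
    Multipliable fun P : {P : Ideal (𝓞 K) // P.IsPrime ∧ d < absNorm P} =>
      (1 - (absNorm (P : Ideal (𝓞 K)) : ℝ) ^ (-r))⁻¹ := by
  have hprime (P : {P : Ideal (𝓞 K) // P.IsPrime ∧ d < absNorm P}) : Prime (P : Ideal (𝓞 K)) :=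
    prime_of_lt_absNorm P.2.1 P.2.2
  let i : {P : Ideal (𝓞 K) // P.IsPrime ∧ d < absNorm P} → {P : Ideal (𝓞 K) // Prime P} :=
    fun P => ⟨P.1, hprime P⟩
  have hsum := (summable_absNorm_rpow_neg (K := K) hr).comp_injective
    (i := i) fun P Q h => Subtype.ext (Subtype.mk.inj h)
  exact Real.multipliable_inv_one_sub (fun P => by positivity)
    (fun P => rpow_neg_absNorm_lt_one (by linarith) (hprime P)) hsum

theorem one_add_absNorm_rpow_le_sigmaK (r : ℝ) {I J : Ideal (𝓞 K)} (hI : I ≠ 0) (hJI : J ∣ I)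
    (hJ : J ≠ ⊤) : 1 + (absNorm J : ℝ) ^ (-r) ≤ sigmaK K r I := by
  classical
  let := fintypeSubtypeDvd I hI
  let one : {J : Ideal (𝓞 K) // J ∣ I} := ⟨1, one_dvd I⟩
  let dvdJ : {J : Ideal (𝓞 K) // J ∣ I} := ⟨J, hJI⟩
  have hne : one ≠ dvdJ := fun h =>
    hJ (by simpa [one, dvdJ, Ideal.one_eq_top] using (congrArg Subtype.val h).symm)
  calc 1 + (absNorm J : ℝ) ^ (-r)
      = ∑ J' ∈ {one, dvdJ}, (absNorm (J' : Ideal (𝓞 K)) : ℝ) ^ (-r) := by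
        rw [Finset.sum_pair hne]
        simp [one, dvdJ]
    _ ≤ sigmaK K r I := Summable.of_finite.sum_le_tsum _ fun _ _ => by positivity

theorem sigmaK_le_prod_normalizedFactors {r : ℝ} (hr : 0 < r) {I : Ideal (𝓞 K)} (hI : I ≠ 0) :
    sigmaK K r I ≤ ∏ P ∈ (normalizedFactors I).toFinset, (1 - (absNorm P : ℝ) ^ (-r))⁻¹ := by
  classical
  let := fintypeSubtypeDvd I hI
  set s := (normalizedFactors I).toFinset
  set e : {J // J ∣ I} → s → ℕ := fun J P =>
    (normalizedFactors (J : Ideal (𝓞 K))).count (P : Ideal (𝓞 K))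
  have hfac (J : {J // J ∣ I}) : (J : Ideal (𝓞 K)) = ∏ P : s, (P : Ideal (𝓞 K)) ^ e J P :=
    (eq_prod_pow_count_normalizedFactors_of_dvd hI J.2).trans (Finset.prod_coe_sort s _).symm
  have hinj : Function.Injective e := fun J J' h =>
    Subtype.ext ((hfac J).trans (h ▸ hfac J').symm)
  rw [sigmaK, tsum_fintype, ← Finset.prod_coe_sort s]
  calc ∑ J : {J // J ∣ I}, (absNorm (J : Ideal (𝓞 K)) : ℝ) ^ (-r)
      = ∑ J : {J // J ∣ I}, ∏ P : s, ((absNorm (P : Ideal (𝓞 K)) : ℝ) ^ (-r)) ^ e J P :=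
        Finset.sum_congr rfl fun J _ => by rw [hfac J, absNorm_prod_pow_rpow]
    _ ≤ ∏ P : s, (1 - (absNorm (P : Ideal (𝓞 K)) : ℝ) ^ (-r))⁻¹ :=
        sum_prod_pow_le_prod_inv_one_sub (fun P => by positivity)
          (fun P => rpow_neg_absNorm_lt_one hr
            (prime_of_normalized_factor _ (Multiset.mem_toFinset.1 P.2))) Finset.univ hinj.injOn

theorem sigmaK_le_tprod_of_lt_absNorm {r : ℝ} (hr : 1 < r) {d : ℕ} {I : Ideal (𝓞 K)}
    (hI : I ≠ 0) (hd : ∀ Q : Ideal (𝓞 K), Q.IsPrime → Q ∣ I → Q ≠ ⊥ → d < absNorm Q) :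
    sigmaK K r I ≤ ∏' P : {P : Ideal (𝓞 K) // P.IsPrime ∧ d < absNorm P},
      (1 - (absNorm (P : Ideal (𝓞 K)) : ℝ) ^ (-r))⁻¹ := by
  classical
  have hs : ∀ P ∈ (normalizedFactors I).toFinset, P.IsPrime ∧ d < absNorm P := fun P hP => by
    have hprime := prime_of_normalized_factor P (Multiset.mem_toFinset.1 hP)
    exact ⟨isPrime_of_prime hprime, hd P (isPrime_of_prime hprime)
      (dvd_of_mem_normalizedFactors (Multiset.mem_toFinset.1 hP)) hprime.ne_zero⟩
  calc sigmaK K r I ≤ ∏ P ∈ (normalizedFactors I).toFinset, (1 - (absNorm P : ℝ) ^ (-r))⁻¹ :=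
        sigmaK_le_prod_normalizedFactors (by linarith) hI
    _ = ∏ P ∈ (normalizedFactors I).toFinset.subtype fun P => P.IsPrime ∧ d < absNorm P,
          (1 - (absNorm (P : Ideal (𝓞 K)) : ℝ) ^ (-r))⁻¹ :=
        (Finset.prod_subtype_of_mem _ hs).symm
    _ ≤ _ := Real.prod_le_tprod_of_one_le (multipliable_inv_one_sub_absNorm_rpow hr d)
        (fun P => (one_le_inv₀ (sub_pos.2 (rpow_neg_absNorm_lt_one (by linarith)
          (prime_of_lt_absNorm P.2.1 P.2.2)))).2 (sub_le_self _ (by positivity))) _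

end NumberField

theorem stmt17_general (r : ℝ) (hr : 1 < r) (K : Type*) [Field K] [NumberField K]
    (d : ℕ)
    (I : Ideal (𝓞 K)) (hI : I ≠ 0) :
    sigmaK K r I ∉ Set.Ioo
      (∏' P : {P : Ideal (𝓞 K) // P.IsPrime ∧ d < Ideal.absNorm P},
        (1 - (Ideal.absNorm (P : Ideal (𝓞 K)) : ℝ) ^ (-r))⁻¹)
      (1 + (d : ℝ) ^ (-r)) ∧
    ((∃ Q : Ideal (𝓞 K), Q.IsPrime ∧ Q ∣ I ∧ Q ≠ ⊥ ∧ Ideal.absNorm Q ≤ d) →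
      1 + (d : ℝ) ^ (-r) ≤ sigmaK K r I) ∧
    ((¬ ∃ Q : Ideal (𝓞 K), Q.IsPrime ∧ Q ∣ I ∧ Q ≠ ⊥ ∧ Ideal.absNorm Q ≤ d) →
      sigmaK K r I ≤
        ∏' P : {P : Ideal (𝓞 K) // P.IsPrime ∧ d < Ideal.absNorm P},
          (1 - (Ideal.absNorm (P : Ideal (𝓞 K)) : ℝ) ^ (-r))⁻¹) := by
  have hge : (∃ Q : Ideal (𝓞 K), Q.IsPrime ∧ Q ∣ I ∧ Q ≠ ⊥ ∧ Ideal.absNorm Q ≤ d) →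
      1 + (d : ℝ) ^ (-r) ≤ sigmaK K r I := by
    rintro ⟨Q, hQ, hQI, hQ0, hQd⟩
    have hQpos : (0 : ℝ) < absNorm Q :=
      mod_cast Nat.pos_of_ne_zero (mt absNorm_eq_zero_iff.1 hQ0)
    calc 1 + (d : ℝ) ^ (-r) ≤ 1 + (absNorm Q : ℝ) ^ (-r) := by
          gcongr 1 + ?_
          exact Real.rpow_le_rpow_of_nonpos hQpos (mod_cast hQd) (by linarith)
      _ ≤ sigmaK K r I := one_add_absNorm_rpow_le_sigmaK r hI hQI hQ.ne_top
  have hle : (¬ ∃ Q : Ideal (𝓞 K), Q.IsPrime ∧ Q ∣ I ∧ Q ≠ ⊥ ∧ Ideal.absNorm Q ≤ d) →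
      sigmaK K r I ≤ ∏' P : {P : Ideal (𝓞 K) // P.IsPrime ∧ d < Ideal.absNorm P},
        (1 - (Ideal.absNorm (P : Ideal (𝓞 K)) : ℝ) ^ (-r))⁻¹ := fun h =>
    sigmaK_le_tprod_of_lt_absNorm hr hI fun Q hQ hQI hQ0 =>
      not_le.1 fun hQd => h ⟨Q, hQ, hQI, hQ0, hQd⟩
  refine ⟨fun ⟨hlo, hhi⟩ => ?_, hge, hle⟩
  by_cases h : ∃ Q : Ideal (𝓞 K), Q.IsPrime ∧ Q ∣ I ∧ Q ≠ ⊥ ∧ Ideal.absNorm Q ≤ d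
  · exact (hge h).not_gt hhi
  · exact (hle h).not_gt hlo

/-- If `d` is an `r`-mighty norm of `K`, then no value `σ_{r,K}(I)` lies in the open interval
`(∏_{N(𝔭) > d} (1 − N(𝔭)^{-r})⁻¹, 1 + d^{-r})`: if some prime `𝔮` with `N(𝔮) ≤ d` divides
`I` then `σ_{r,K}(I) ≥ 1 + d^{-r}`, and otherwise
`σ_{r,K}(I) ≤ ∏_{N(𝔭) > d} (1 − N(𝔭)^{-r})⁻¹`. -/
theorem stmt17 (r : ℝ) (hr : 1 < r) (K : Type*) [Field K] [NumberField K]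
    (d : ℕ) (hd : IsMightyNorm K r d)
    (I : Ideal (𝓞 K)) (hI : I ≠ 0) :
    sigmaK K r I ∉ Set.Ioo
      (∏' P : {P : Ideal (𝓞 K) // P.IsPrime ∧ d < Ideal.absNorm P},
        (1 - (Ideal.absNorm (P : Ideal (𝓞 K)) : ℝ) ^ (-r))⁻¹)
      (1 + (d : ℝ) ^ (-r)) ∧
    ((∃ Q : Ideal (𝓞 K), Q.IsPrime ∧ Q ∣ I ∧ Q ≠ ⊥ ∧ Ideal.absNorm Q ≤ d) →
      1 + (d : ℝ) ^ (-r) ≤ sigmaK K r I) ∧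
    ((¬ ∃ Q : Ideal (𝓞 K), Q.IsPrime ∧ Q ∣ I ∧ Q ≠ ⊥ ∧ Ideal.absNorm Q ≤ d) →
      sigmaK K r I ≤
        ∏' P : {P : Ideal (𝓞 K) // P.IsPrime ∧ d < Ideal.absNorm P},
          (1 - (Ideal.absNorm (P : Ideal (𝓞 K)) : ℝ) ^ (-r))⁻¹) :=
  stmt17_general r hr K d I hI
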